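/- arXiv:1809.06778 — 5 statements merged into one kernel-verified Lean document; each statement's English description precedes it below -/
import Mathlib

section
/- Let f : ℝ^n → ℝ be a convex function that is piecewise linear, i.e., there exist finitely many affine functions p_1, …, p_m on ℝ^n such that for every x ∈ ℝ^n there is some i ≤ m with f(x) = p_i(x). Then there exist finitely many affine functions q_1, …, q_k on ℝ^n such that f(x) = max_{i=1,…,k} q_i(x) for all x ∈ ℝ^n. -/
/-- A convex piecewise linear function on `ℝ^n` is the pointwise maximum of
finitely many affine functions. -/
theorem convex_piecewise_linear_eq_max_affine
    (n m : ℕ) (f : (Fin n → ℝ) → ℝ)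
    (a : Fin m → Fin n → ℝ) (b : Fin m → ℝ)
    (hconv : ConvexOn ℝ Set.univ f)
    (hpw : ∀ x : Fin n → ℝ, ∃ i : Fin m, f x = (∑ j, a i j * x j) + b i) :
    ∃ (k : ℕ) (c : Fin (k + 1) → Fin n → ℝ) (d : Fin (k + 1) → ℝ),
      ∀ x : Fin n → ℝ,
        f x = Finset.univ.sup' Finset.univ_nonempty
          (fun i => (∑ j, c i j * x j) + d i) := by
  classical
  set p : Fin m → (Fin n → ℝ) → ℝ := fun i x => (∑ j, a i j * x j) + b i with hpdef
  -- continuity of f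
  have hcont : Continuous f := by
    exact continuousOn_univ.mp (hconv.continuousOn isOpen_univ)
  have hpcont : ∀ i, Continuous (p i) := by
    intro i
    exact (continuous_finset_sum _ fun j _ => continuous_const.mul (continuous_apply j)).add
      continuous_const
  -- affine property of p
  have haff : ∀ (i : Fin m) (x y : Fin n → ℝ) (s t : ℝ), s + t = 1 →
      p i (s • x + t • y) = s * p i x + t * p i y := by
    intro i x y s t hst
    simp only [hpdef, Pi.add_apply, Pi.smul_apply, smul_eq_mul]
    have h1 : (∑ j, a i j * (s * x j + t * y j))
        = s * (∑ j, a i j * x j) + t * (∑ j, a i j * y j) := by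
      rw [Finset.mul_sum, Finset.mul_sum, ← Finset.sum_add_distrib]
      exact Finset.sum_congr rfl fun j _ => by ring
    rw [h1]
    linear_combination (-(b i)) * hst
  -- key: if f = p i on a ball, then p i ≤ f everywhere
  have hmin : ∀ (i : Fin m) (x₀ : Fin n → ℝ) (r : ℝ), 0 < r →
      (∀ z ∈ Metric.ball x₀ r, f z = p i z) → ∀ y, p i y ≤ f y := by
    intro i x₀ r hr hball y
    set D := dist y x₀ with hD
    have hD0 : (0:ℝ) ≤ D := dist_nonneg
    set ε : ℝ := r / (2 * (D + 1)) with hε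
    have hεpos : 0 < ε := by positivity
    set z : Fin n → ℝ := x₀ + ε • (x₀ - y) with hz
    have hzball : z ∈ Metric.ball x₀ r := by
      rw [Metric.mem_ball]
      have : dist z x₀ = ε * D := by
        rw [hz, dist_eq_norm]
        simp only [add_sub_cancel_left]
        rw [norm_smul, Real.norm_eq_abs, abs_of_pos hεpos, hD, dist_eq_norm,
          ← norm_neg (x₀ - y)]
        congr 1
        abel_nf
      rw [this, hε]
      calc r / (2 * (D + 1)) * D ≤ r / (2 * (D + 1)) * (D + 1) := by
            apply mul_le_mul_of_nonneg_left (by linarith) (by positivity)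
        _ = r / 2 := by field_simp
        _ < r := by linarith
    set s : ℝ := 1 / (1 + ε) with hs
    set t : ℝ := ε / (1 + ε) with ht
    have h1ε : (0:ℝ) < 1 + ε := by linarith
    have hst : s + t = 1 := by rw [hs, ht]; field_simp
    have hspos : 0 < s := by positivity
    have htpos : 0 < t := by positivity
    have hx₀eq : s • z + t • y = x₀ := by
      funext j
      simp only [Pi.add_apply, Pi.smul_apply, smul_eq_mul, hz, Pi.sub_apply]
      rw [hs, ht]
      field_simp
      ring
    have hcx := hconv.2 (Set.mem_univ z) (Set.mem_univ y) hspos.le htpos.le hst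
    rw [hx₀eq] at hcx
    simp only [smul_eq_mul] at hcx
    have hfz : f z = p i z := hball z hzball
    have hfx₀ : f x₀ = p i x₀ := hball x₀ (Metric.mem_ball_self hr)
    have hpx₀ : p i x₀ = s * p i z + t * p i y := by
      rw [← hx₀eq]; exact haff i z y s t hst
    have hty : t * p i y ≤ t * f y := by
      have : f x₀ ≤ s * f z + t * f y := hcx
      rw [hfx₀, hpx₀, hfz] at this
      linarith
    exact le_of_mul_le_mul_left hty htpos
  -- the coincidence sets
  set S : Fin m → Set (Fin n → ℝ) := fun i => {x | f x = p i x} with hS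
  have hclosed : ∀ i, IsClosed (S i) := fun i => isClosed_eq hcont (hpcont i)
  have hcover : (⋃ i, S i) = Set.univ := by
    apply Set.eq_univ_of_forall
    intro x
    obtain ⟨i, hi⟩ := hpw x
    exact Set.mem_iUnion.2 ⟨i, hi⟩
  have hdense := dense_iUnion_interior_of_closed hclosed hcover
  -- the set of global affine minorants among the p i
  set I : Finset (Fin m) := Finset.univ.filter (fun i => ∀ y, p i y ≤ f y) with hI
  -- every point is in some coincidence set of a minorant
  have hmain : ∀ x, ∃ i ∈ I, f x = p i x := by
    have hDcl : IsClosed (⋃ i ∈ I, S i) :=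
      isClosed_biUnion_finset fun i _ => hclosed i
    have hsub : (⋃ i, interior (S i)) ⊆ ⋃ i ∈ I, S i := by
      intro x hx
      obtain ⟨i, hxi⟩ := Set.mem_iUnion.1 hx
      have hne : (interior (S i)).Nonempty := ⟨x, hxi⟩
      obtain ⟨y, hy⟩ := hne
      obtain ⟨r, hr, hball⟩ := Metric.isOpen_iff.1 isOpen_interior y hy
      have hiI : i ∈ I := by
        rw [hI, Finset.mem_filter]
        exact ⟨Finset.mem_univ i,
          hmin i y r hr fun z hz => (interior_subset (hball hz) : z ∈ S i)⟩
      exact Set.mem_biUnion hiI (interior_subset hxi)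
    have hDuniv : (⋃ i ∈ I, S i) = Set.univ := by
      have hd2 : Dense (⋃ i ∈ I, S i) := hdense.mono hsub
      rw [← hDcl.closure_eq]
      exact hd2.closure_eq
    intro x
    have hx : x ∈ ⋃ i ∈ I, S i := hDuniv ▸ Set.mem_univ x
    obtain ⟨i, hiI, hxi⟩ := Set.mem_iUnion₂.1 hx
    exact ⟨i, hiI, hxi⟩
  have hIne : I.Nonempty := by
    obtain ⟨i, hiI, _⟩ := hmain 0
    exact ⟨i, hiI⟩
  set k : ℕ := I.card - 1 with hk
  have hkcard : I.card = k + 1 := (Nat.succ_pred_eq_of_pos hIne.card_pos).symm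
  set e := I.orderIsoOfFin hkcard with he
  refine ⟨k, fun i => a (e i), fun i => b (e i), fun x => ?_⟩
  apply le_antisymm
  · obtain ⟨i₀, hi₀I, hfx⟩ := hmain x
    have hj : ((e (e.symm ⟨i₀, hi₀I⟩) : I) : Fin m) = i₀ := by
      rw [OrderIso.apply_symm_apply]
    calc f x = (∑ j, a (e (e.symm ⟨i₀, hi₀I⟩)) j * x j) + b (e (e.symm ⟨i₀, hi₀I⟩)) := by
          rw [hj]; exact hfx
      _ ≤ _ := Finset.le_sup' (fun i => (∑ j, a (e i) j * x j) + b (e i))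
          (Finset.mem_univ (e.symm ⟨i₀, hi₀I⟩))
  · apply Finset.sup'_le
    intro i _
    have hiI : ((e i : I) : Fin m) ∈ I := (e i).2
    exact (Finset.mem_filter.1 hiI).2 x
end

section
/- Let f : [0,1]^n → [0,1] be a convex McNaughton function. Then there exist k ≥ 1, integer vectors M_1, …, M_k ∈ ℤ^n and integers q_1, …, q_k ∈ ℤ such that f(x) = max_{i=1,…,k} (M_i · x + q_i) for all x ∈ [0,1]^n. -/
open Set Topology Filter

private lemma affine_comb (n : ℕ) (a : Fin n → ℤ) (b : ℤ) (c d : ℝ) (h : c + d = 1)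
    (z y : Fin n → ℝ) :
    (∑ j, (a j : ℝ) * (c • z + d • y) j) + (b : ℝ)
      = c * ((∑ j, (a j : ℝ) * z j) + b) + d * ((∑ j, (a j : ℝ) * y j) + b) := by
  have hj : ∀ j ∈ Finset.univ, (a j : ℝ) * (c • z + d • y) j
      = c * ((a j : ℝ) * z j) + d * ((a j : ℝ) * y j) := by
    intro j _
    simp only [Pi.add_apply, Pi.smul_apply, smul_eq_mul]
    ring
  rw [Finset.sum_congr rfl hj, Finset.sum_add_distrib, ← Finset.mul_sum, ← Finset.mul_sum]
  linear_combination (-(b : ℝ)) * h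

/-- A McNaughton function: a continuous function `[0,1]^n → [0,1]` which is
piecewise linear with integer coefficients. -/
def IsMcNaughton (n : ℕ) (f : (Fin n → ℝ) → ℝ) : Prop :=
  ContinuousOn f (Set.Icc (0 : Fin n → ℝ) 1) ∧
  (∀ x ∈ Set.Icc (0 : Fin n → ℝ) 1, f x ∈ Set.Icc (0 : ℝ) 1) ∧
  ∃ (m : ℕ) (a : Fin m → Fin n → ℤ) (b : Fin m → ℤ),
    ∀ x ∈ Set.Icc (0 : Fin n → ℝ) 1,
      ∃ i, f x = (∑ j, (a i j : ℝ) * x j) + (b i : ℝ)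

/-- A convex McNaughton function is the pointwise maximum of finitely many
affine functions with integer coefficients. -/
theorem convex_mcNaughton_eq_max_integer_affine
    (n : ℕ) (f : (Fin n → ℝ) → ℝ)
    (hf : IsMcNaughton n f)
    (hconv : ConvexOn ℝ (Set.Icc (0 : Fin n → ℝ) 1) f) :
    ∃ (k : ℕ) (M : Fin (k + 1) → Fin n → ℤ) (q : Fin (k + 1) → ℤ),
      ∀ x ∈ Set.Icc (0 : Fin n → ℝ) 1,
        f x = Finset.univ.sup' Finset.univ_nonempty
          (fun i => (∑ j, (M i j : ℝ) * x j) + (q i : ℝ)) := by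
  classical
  obtain ⟨hcont, _hrange, m, a, b, hab⟩ := hf
  set C : Set (Fin n → ℝ) := Set.Icc 0 1 with hCdef
  have hCconv : Convex ℝ C := convex_Icc _ _
  have h0C : (0 : Fin n → ℝ) ∈ C := ⟨le_refl _, zero_le_one⟩
  haveI : Nonempty C := ⟨⟨0, h0C⟩⟩
  haveI : CompleteSpace C := (isClosed_Icc : IsClosed C).completeSpace_coe
  set p : Fin m → (Fin n → ℝ) → ℝ := fun i x => (∑ j, (a i j : ℝ) * x j) + (b i : ℝ)
    with hpdef
  have pc : ∀ i, Continuous (p i) := by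
    intro i
    exact (continuous_finset_sum _ fun j _ =>
      continuous_const.mul (continuous_apply j)).add continuous_const
  have frc : Continuous (C.restrict f) := continuousOn_iff_continuous_restrict.mp hcont
  set S : Fin m → Set C := fun i => {x : C | f ↑x = p i ↑x} with hSdef
  have Sc : ∀ i, IsClosed (S i) :=
    fun i => isClosed_eq frc ((pc i).comp continuous_subtype_val)
  have Scover : ⋃ i, S i = univ := by
    ext x
    simp only [mem_iUnion, mem_univ, iff_true]
    exact hab x x.2
  have hdense : Dense (⋃ i, interior (S i)) := dense_iUnion_interior_of_closed Sc Scover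
  -- key support lemma
  have key : ∀ i, (interior (S i)).Nonempty → ∀ y ∈ C, p i y ≤ f y := by
    rintro i ⟨z, hz⟩ y hy
    have hzS' : z ∈ S i := interior_subset hz
    have hzS : f ↑z = p i ↑z := hzS'
    rw [mem_interior_iff_mem_nhds, nhds_induced, Filter.mem_comap] at hz
    obtain ⟨V, hV, hVS⟩ := hz
    have hcurve : Continuous fun t : ℝ => (1 - t) • (↑z : Fin n → ℝ) + t • y := by
      exact ((continuous_const.sub continuous_id).smul continuous_const).add
        (continuous_id.smul continuous_const)
    have h0 : ((fun t : ℝ => (1 - t) • (↑z : Fin n → ℝ) + t • y) 0) = ↑z := by simp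
    have htend : Filter.Tendsto (fun t : ℝ => (1 - t) • (↑z : Fin n → ℝ) + t • y)
        (𝓝[>] (0 : ℝ)) (𝓝 (↑z : Fin n → ℝ)) := by
      have h' := hcurve.tendsto 0
      have h0' : (1 - (0:ℝ)) • (↑z : Fin n → ℝ) + (0:ℝ) • y = ↑z := by simp
      rw [h0'] at h'
      exact h'.mono_left nhdsWithin_le_nhds
    have hev1 : ∀ᶠ t in 𝓝[>] (0 : ℝ),
        (1 - t) • (↑z : Fin n → ℝ) + t • y ∈ V := htend.eventually_mem hV
    have hev2 : ∀ᶠ t in 𝓝[>] (0 : ℝ), t ∈ Ioo (0 : ℝ) 1 :=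
      Ioo_mem_nhdsGT_of_mem ⟨le_refl _, one_pos⟩
    obtain ⟨t, htV, ht0, ht1⟩ := (hev1.and hev2).exists
    set w : Fin n → ℝ := (1 - t) • (↑z : Fin n → ℝ) + t • y with hwdef
    have hwC : w ∈ C := hCconv z.2 hy (by linarith) (le_of_lt ht0) (by ring)
    have hwS : f w = p i w := hVS (show (⟨w, hwC⟩ : C) ∈ Subtype.val ⁻¹' V from htV)
    have hconvineq : f w ≤ (1 - t) * f ↑z + t * f y :=
      hconv.2 z.2 hy (by linarith) (le_of_lt ht0) (by ring)
    have haff : p i w = (1 - t) * p i ↑z + t * p i y :=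
      affine_comb n (a i) (b i) (1 - t) t (by ring) ↑z y
    have : t * p i y ≤ t * f y := by
      rw [hzS] at hconvineq
      rw [haff] at hwS
      linarith
    exact le_of_mul_le_mul_left this ht0
  set T : Finset (Fin m) := Finset.univ.filter (fun i => (interior (S i)).Nonempty)
    with hTdef
  have memT : ∀ i, i ∈ T ↔ (interior (S i)).Nonempty := by
    intro i; simp [hTdef]
  have hT : T.Nonempty := by
    obtain ⟨x, hx⟩ := hdense.nonempty
    obtain ⟨i, hi⟩ := mem_iUnion.mp hx
    exact ⟨i, (memT i).mpr ⟨x, hi⟩⟩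
  have hle : ∀ x ∈ C, T.sup' hT (fun i => p i x) ≤ f x := fun x hx =>
    Finset.sup'_le _ _ fun i hi => key i ((memT i).mp hi) x hx
  have hge : ∀ x ∈ C, f x ≤ T.sup' hT (fun i => p i x) := by
    have gc : Continuous fun x : C => T.sup' hT (fun i => p i ↑x) :=
      Continuous.finset_sup'_apply hT fun i _ => (pc i).comp continuous_subtype_val
    have hclosed : IsClosed {x : C | f ↑x ≤ T.sup' hT fun i => p i ↑x} :=
      isClosed_le frc gc
    have hsub : (⋃ i, interior (S i)) ⊆ {x : C | f ↑x ≤ T.sup' hT fun i => p i ↑x} := by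
      intro x hx
      obtain ⟨i, hi⟩ := mem_iUnion.mp hx
      have hiT : i ∈ T := (memT i).mpr ⟨x, hi⟩
      have hxS : x ∈ S i := interior_subset hi
      have hx' : f ↑x = p i ↑x := hxS
      show f ↑x ≤ T.sup' hT fun i => p i ↑x
      rw [hx']
      exact Finset.le_sup' (fun i => p i (↑x : Fin n → ℝ)) hiT
    have hK : {x : C | f ↑x ≤ T.sup' hT fun i => p i ↑x} = univ := by
      apply eq_univ_of_univ_subset
      rw [← hdense.closure_eq]
      exact hclosed.closure_subset_iff.mpr hsub
    intro x hx
    have := hK ▸ mem_univ (⟨x, hx⟩ : C)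
    exact this
  obtain ⟨k, hk⟩ : ∃ k, T.card = k + 1 :=
    ⟨T.card - 1, (Nat.succ_pred_eq_of_pos (Finset.card_pos.mpr hT)).symm⟩
  let e : Fin (k + 1) ≃ T := (Finset.equivFinOfCardEq hk).symm
  refine ⟨k, fun i => a (e i), fun i => b (e i), fun x hx => ?_⟩
  have hfx : f x = T.sup' hT (fun i => p i x) := le_antisymm (hge x hx) (hle x hx)
  rw [hfx]
  apply le_antisymm
  · apply Finset.sup'_le
    intro j hj
    have : p j x = p (↑(e (e.symm ⟨j, hj⟩))) x := by simp
    rw [this]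
    exact Finset.le_sup' (f := fun i : Fin (k+1) => (∑ jj, ((a (e i) jj : ℝ)) * x jj) + (b (e i) : ℝ))
      (Finset.mem_univ (e.symm ⟨j, hj⟩))
  · apply Finset.sup'_le
    intro i _
    exact Finset.le_sup' (fun i => p i x) (e i).2
end

section
/- Let f : [0,1]^n → [0,1] be a concave McNaughton function. Then there exist k ≥ 1, integer vectors M_1, …, M_k ∈ ℤ^n and integers q_1, …, q_k ∈ ℤ such that f(x) = min_{i=1,…,k} (M_i · x + q_i) for all x ∈ [0,1]^n. -/
/-- A concave McNaughton function is the pointwise minimum of finitely many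
affine functions with integer coefficients. -/
theorem concave_mcNaughton_eq_min_integer_affine
    (n : ℕ) (f : (Fin n → ℝ) → ℝ)
    (hf : IsMcNaughton n f)
    (hconc : ConcaveOn ℝ (Set.Icc (0 : Fin n → ℝ) 1) f) :
    ∃ (k : ℕ) (M : Fin (k + 1) → Fin n → ℤ) (q : Fin (k + 1) → ℤ),
      ∀ x ∈ Set.Icc (0 : Fin n → ℝ) 1,
        f x = Finset.univ.inf' Finset.univ_nonempty
          (fun i => (∑ j, (M i j : ℝ) * x j) + (q i : ℝ)) := by
  classical
  obtain ⟨hcont, hrange, m, a, b, hpiece⟩ := hf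
  set Box : Set (Fin n → ℝ) := Set.Icc 0 1 with hBox
  have hbox0 : (0 : Fin n → ℝ) ∈ Box := Set.mem_Icc.2 ⟨le_refl _, zero_le_one⟩
  set p : Fin m → (Fin n → ℝ) → ℝ := fun i x => (∑ j, (a i j : ℝ) * x j) + b i with hp
  -- affinity of pieces
  have haff : ∀ (i : Fin m) (s : ℝ) (x y : Fin n → ℝ),
      p i ((1 - s) • x + s • y) = (1 - s) * p i x + s * p i y := by
    intro i s x y
    simp only [hp, Pi.add_apply, Pi.smul_apply, smul_eq_mul]
    have : ∀ j : Fin n, (a i j : ℝ) * ((1 - s) * x j + s * y j)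
        = (1 - s) * ((a i j : ℝ) * x j) + s * ((a i j : ℝ) * y j) := by
      intro j; ring
    rw [Finset.sum_congr rfl fun j _ => this j, Finset.sum_add_distrib,
      ← Finset.mul_sum, ← Finset.mul_sum]
    ring
  -- domination lemma
  have hdom : ∀ (i : Fin m) (x0 : Fin n → ℝ) (ε : ℝ), 0 < ε → x0 ∈ Box →
      (∀ w ∈ Box, dist w x0 < ε → f w = p i w) → ∀ y ∈ Box, f y ≤ p i y := by
    intro i x0 ε hε hx0 hloc y hy
    set s : ℝ := min (1/2) (ε / (2 * (dist y x0 + 1))) with hs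
    have hd0 : (0:ℝ) ≤ dist y x0 := dist_nonneg
    have hspos : 0 < s := by
      apply lt_min (by norm_num)
      positivity
    have hs12 : s ≤ 1/2 := min_le_left _ _
    set z : Fin n → ℝ := (1 - s) • x0 + s • y with hz
    have hzbox : z ∈ Box := by
      exact (convex_Icc (0 : Fin n → ℝ) 1) hx0 hy (by linarith) hspos.le (by ring)
    have hdistz : dist z x0 < ε := by
      have h1 : z - x0 = s • (y - x0) := by
        rw [hz]; module
      have h2 : dist z x0 = s * dist y x0 := by
        rw [dist_eq_norm, h1, norm_smul, Real.norm_eq_abs, abs_of_pos hspos,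
          ← dist_eq_norm]
      rw [h2]
      have hsle : s ≤ ε / (2 * (dist y x0 + 1)) := min_le_right _ _
      have h3 : s * dist y x0 ≤ (ε / (2 * (dist y x0 + 1))) * dist y x0 :=
        mul_le_mul_of_nonneg_right hsle hd0
      have h4 : (ε / (2 * (dist y x0 + 1))) * dist y x0 < ε := by
        rw [div_mul_eq_mul_div, div_lt_iff₀ (by positivity)]
        nlinarith
      linarith
    have hfz : f z = p i z := hloc z hzbox hdistz
    have hfx0 : f x0 = p i x0 := hloc x0 hx0 (by simpa using hε)
    have hcc : (1 - s) • f x0 + s • f y ≤ f ((1 - s) • x0 + s • y) :=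
      hconc.2 hx0 hy (by linarith) hspos.le (by ring)
    have hcc' : (1 - s) * f x0 + s * f y ≤ f z := by simpa [hz] using hcc
    have := haff i s x0 y
    rw [← hz] at this
    rw [hfz, this, hfx0] at hcc'
    have hsfy : s * f y ≤ s * p i y := by linarith
    exact le_of_mul_le_mul_left hsfy hspos
  -- coverage lemma (via Baire category on the box)
  have hcover : ∀ x ∈ Box, ∃ i, f x = p i x ∧ ∀ y ∈ Box, f y ≤ p i y := by
    intro x hx
    haveI : CompleteSpace Box := (isClosed_Icc : IsClosed Box).completeSpace_coe
    set G : Fin m → Set Box := fun i => {z : Box | f ↑z = p i ↑z} with hG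
    have hfc : Continuous fun z : Box => f ↑z := hcont.restrict
    have hpc : ∀ i, Continuous fun z : Box => p i ↑z := by
      intro i
      have h1 : Continuous fun z : Box => ∑ j, (a i j : ℝ) * (z : Fin n → ℝ) j :=
        continuous_finset_sum _ fun j _ =>
          continuous_const.mul ((continuous_apply j).comp continuous_subtype_val)
      exact h1.add continuous_const
    have hGc : ∀ i, IsClosed (G i) := fun i => isClosed_eq hfc (hpc i)
    have hGcov : ∀ z : Box, ∃ i, z ∈ G i := fun z => hpiece ↑z z.2
    set J : Finset (Fin m) := Finset.univ.filter (fun i => f x = p i x) with hJ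
    set xt : Box := ⟨x, hx⟩ with hxt
    set C : Set Box := ⋃ i ∈ (Jᶜ : Finset (Fin m)), G i with hC
    have hCc : IsClosed C := Set.Finite.isClosed_biUnion (Finset.finite_toSet _) fun i _ => hGc i
    have hxC : xt ∉ C := by
      intro hmem
      simp only [hC, Set.mem_iUnion] at hmem
      obtain ⟨i, hi, hzi⟩ := hmem
      rw [Finset.mem_compl, hJ, Finset.mem_filter] at hi
      exact hi ⟨Finset.mem_univ i, hzi⟩
    set F : Fin m → Set Box := fun i => if i ∈ J then G i else C with hF
    have hFc : ∀ i, IsClosed (F i) := by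
      intro i
      by_cases h : i ∈ J <;> simp [hF, h, hGc i, hCc]
    have hFcov : ⋃ i, F i = Set.univ := by
      ext z
      simp only [Set.mem_univ, iff_true, Set.mem_iUnion]
      obtain ⟨i, hzi⟩ := hGcov z
      by_cases h : i ∈ J
      · exact ⟨i, by simp [hF, h, hzi]⟩
      · refine ⟨i, ?_⟩
        simp only [hF, h, if_false, hC]
        exact Set.mem_biUnion (Finset.mem_compl.2 h) hzi
    have hdense : Dense (⋃ i, interior (F i)) :=
      dense_iUnion_interior_of_closed hFc hFcov
    obtain ⟨z, hz1, hz2⟩ : ∃ z, z ∈ ⋃ i, interior (F i) ∧ z ∈ Cᶜ :=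
      hdense.exists_mem_open hCc.isOpen_compl ⟨xt, hxC⟩
    obtain ⟨i, hzi⟩ := Set.mem_iUnion.1 hz1
    have hiJ : i ∈ J := by
      by_contra h
      have : z ∈ C := by
        have := interior_subset hzi
        simpa [hF, h] using this
      exact hz2 this
    have hzi' : z ∈ interior (G i) := by simpa [hF, hiJ] using hzi
    obtain ⟨ε, hε, hball⟩ := Metric.mem_nhds_iff.1 (mem_interior_iff_mem_nhds.1 hzi')
    have hloc : ∀ w ∈ Box, dist w (↑z : Fin n → ℝ) < ε → f w = p i w := by
      intro w hw hdw
      have : (⟨w, hw⟩ : Box) ∈ Metric.ball z ε := by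
        rw [Metric.mem_ball, Subtype.dist_eq]
        exact hdw
      exact hball this
    have hfxp : f x = p i x := by
      rw [hJ, Finset.mem_filter] at hiJ
      exact hiJ.2
    exact ⟨i, hfxp, hdom i ↑z ε hε z.2 hloc⟩
  -- assemble
  obtain ⟨i₀, hi₀x, hi₀⟩ := hcover 0 hbox0
  have hm : m ≠ 0 := by
    intro h; exact absurd (h ▸ i₀ : Fin 0).isLt (by simp)
  obtain ⟨k, rfl⟩ : ∃ k, m = k + 1 := ⟨m - 1, (Nat.succ_pred_eq_of_pos (Nat.pos_of_ne_zero hm)).symm⟩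
  set r : Fin (k + 1) → Fin (k + 1) := fun i =>
    if ∀ y ∈ Box, f y ≤ p i y then i else i₀ with hr
  have hrdom : ∀ i, ∀ y ∈ Box, f y ≤ p (r i) y := by
    intro i
    show ∀ y ∈ Box, f y ≤ p (if ∀ y ∈ Box, f y ≤ p i y then i else i₀) y
    by_cases h : ∀ y ∈ Box, f y ≤ p i y
    · rw [if_pos h]; exact h
    · rw [if_neg h]; exact hi₀
  refine ⟨k, fun i => a (r i), fun i => b (r i), ?_⟩
  intro x hx
  apply le_antisymm
  · apply Finset.le_inf'
    intro i _
    exact hrdom i x hx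
  · obtain ⟨i, hfi, hidom⟩ := hcover x hx
    have hri : r i = i := by
      show (if ∀ y ∈ Box, f y ≤ p i y then i else i₀) = i
      rw [if_pos hidom]
    calc Finset.univ.inf' Finset.univ_nonempty
          (fun i => (∑ j, ((a (r i)) j : ℝ) * x j) + ((b (r i)) : ℝ))
        ≤ (∑ j, ((a (r i)) j : ℝ) * x j) + ((b (r i)) : ℝ) :=
          Finset.inf'_le _ (Finset.mem_univ i)
      _ = f x := by rw [hri, hfi]
end

section
/- Every function in the Łukasiewicz functional closure is a McNaughton function: if f : [0,1]^n → [0,1] belongs to the smallest set of functions [0,1]^n → [0,1] containing the constant 0 function and the coordinate projections x ↦ x_j, and closed under negation f ↦ 1−f and the binary operation (f,g) ↦ max(0, f+g−1), then f is continuous and there exist finitely many affine polynomials p_1, …, p_m with integer coefficients such that for every x ∈ [0,1]^n there is i ≤ m with f(x) = p_i(x). -/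
/-- The Łukasiewicz functional closure: the smallest set of functions
containing the constant 0 and the projections, closed under negation
`f ↦ 1 - f` and strong conjunction `(f,g) ↦ max(0, f+g-1)`. -/
inductive LukClosure (n : ℕ) : ((Fin n → ℝ) → ℝ) → Prop
  | zero : LukClosure n (fun _ => 0)
  | proj (j : Fin n) : LukClosure n (fun x => x j)
  | neg (f : (Fin n → ℝ) → ℝ) : LukClosure n f → LukClosure n (fun x => 1 - f x)
  | otimes (f g : (Fin n → ℝ) → ℝ) : LukClosure n f → LukClosure n g →
      LukClosure n (fun x => max 0 (f x + g x - 1))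

lemma lukClosure_aux (n : ℕ) (f : (Fin n → ℝ) → ℝ) (hf : LukClosure n f) :
    Continuous f ∧ ∃ L : List ((Fin n → ℤ) × ℤ), ∀ x : Fin n → ℝ,
      ∃ p ∈ L, f x = (∑ j, (p.1 j : ℝ) * x j) + (p.2 : ℝ) := by
  induction hf with
  | zero =>
      refine ⟨continuous_const, [((0 : Fin n → ℤ), (0 : ℤ))], fun x => ?_⟩
      simp
  | proj j =>
      refine ⟨continuous_apply j, [((fun k => if k = j then 1 else 0 : Fin n → ℤ), (0 : ℤ))],
        fun x => ?_⟩
      refine ⟨_, List.mem_singleton_self _, ?_⟩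
      simp [ite_smul, Finset.sum_ite_eq', apply_ite (fun z : ℤ => (z : ℝ))]
  | neg g hg ih =>
      obtain ⟨hc, L, hL⟩ := ih
      refine ⟨continuous_const.sub hc, L.map (fun p => (-p.1, 1 - p.2)), fun x => ?_⟩
      obtain ⟨p, hp, hfx⟩ := hL x
      refine ⟨(-p.1, 1 - p.2), List.mem_map_of_mem hp, ?_⟩
      show 1 - g x = _
      rw [hfx]
      simp only [Pi.neg_apply, Int.cast_neg, neg_mul, Finset.sum_neg_distrib, Int.cast_sub,
        Int.cast_one]
      ring
  | otimes g h hg hh ihg ihh =>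
      obtain ⟨hcg, L1, hL1⟩ := ihg
      obtain ⟨hch, L2, hL2⟩ := ihh
      refine ⟨continuous_const.max ((hcg.add hch).sub continuous_const),
        ((0 : Fin n → ℤ), (0 : ℤ)) ::
          (L1.product L2).map (fun pq => (pq.1.1 + pq.2.1, pq.1.2 + pq.2.2 - 1)),
        fun x => ?_⟩
      rcases le_or_gt (g x + h x - 1) 0 with hle | hlt
      · exact ⟨(0, 0), List.mem_cons_self, by simp [max_eq_left hle]⟩
      · obtain ⟨p, hp, hgx⟩ := hL1 x
        obtain ⟨q, hq, hhx⟩ := hL2 x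
        refine ⟨(p.1 + q.1, p.2 + q.2 - 1), List.mem_cons_of_mem _
          (List.mem_map_of_mem (List.mem_product.2 ⟨hp, hq⟩)), ?_⟩
        show (0:ℝ) ⊔ (g x + h x - 1) = _
        rw [show (0:ℝ) ⊔ (g x + h x - 1) = g x + h x - 1 from max_eq_right hlt.le, hgx, hhx]
        simp only [Pi.add_apply, Int.cast_add, Int.cast_sub, Int.cast_one, add_mul,
          Finset.sum_add_distrib]
        ring

/-- Every function in the Łukasiewicz functional closure is a McNaughton
function: continuous and piecewise linear with integer coefficients. -/
theorem lukClosure_isMcNaughton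
    (n : ℕ) (f : (Fin n → ℝ) → ℝ)
    (hf01 : ∀ x ∈ Set.Icc (0 : Fin n → ℝ) 1, f x ∈ Set.Icc (0 : ℝ) 1)
    (hf : LukClosure n f) :
    ContinuousOn f (Set.Icc (0 : Fin n → ℝ) 1) ∧
    ∃ (m : ℕ) (a : Fin m → Fin n → ℤ) (b : Fin m → ℤ),
      ∀ x ∈ Set.Icc (0 : Fin n → ℝ) 1,
        ∃ i, f x = (∑ j, (a i j : ℝ) * x j) + (b i : ℝ) := by
  obtain ⟨hc, L, hL⟩ := lukClosure_aux n f hf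
  refine ⟨hc.continuousOn, L.length, fun i => (L.get i).1, fun i => (L.get i).2,
    fun x _ => ?_⟩
  obtain ⟨p, hp, hfx⟩ := hL x
  obtain ⟨i, hi⟩ := List.mem_iff_get.1 hp
  refine ⟨i, ?_⟩
  show f x = (∑ j, ((L.get i).1 j : ℝ) * x j) + ((L.get i).2 : ℝ)
  rw [hi]; exact hfx
end

section
/- The Łukasiewicz distance from satisfaction of the manifold-regularization rule R → ((p_1 → p_2) ∧ (p_2 → p_1)) equals a maximum of affine functions: for all r, p_1, p_2 ∈ [0,1], 1 − min(1, 1 − r + min( min(1, 1−p_1+p_2), min(1, 1−p_2+p_1) )) = max{0, r + p_1 − p_2 − 1, r − p_1 + p_2 − 1}. Consequently, for any ξ ≥ 0, the constraint that this distance is at most ξ is equivalent to the pair of linear constraints r + p_1 − p_2 − 1 ≤ ξ and r − p_1 + p_2 − 1 ≤ ξ. -/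
/-- The Łukasiewicz distance from satisfaction of the manifold-regularization
rule `R → ((p₁ → p₂) ∧ (p₂ → p₁))` equals a maximum of affine functions, and
bounding it by `ξ` is equivalent to a pair of linear constraints. -/
theorem manifold_regularization_distance
    (r p₁ p₂ : ℝ) (hr : r ∈ Set.Icc (0 : ℝ) 1)
    (hp₁ : p₁ ∈ Set.Icc (0 : ℝ) 1) (hp₂ : p₂ ∈ Set.Icc (0 : ℝ) 1) :
    (1 - min 1 (1 - r + min (min 1 (1 - p₁ + p₂)) (min 1 (1 - p₂ + p₁))) =
      max 0 (max (r + p₁ - p₂ - 1) (r - p₁ + p₂ - 1))) ∧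
    ∀ ξ : ℝ, 0 ≤ ξ →
      (1 - min 1 (1 - r + min (min 1 (1 - p₁ + p₂)) (min 1 (1 - p₂ + p₁))) ≤ ξ ↔
        r + p₁ - p₂ - 1 ≤ ξ ∧ r - p₁ + p₂ - 1 ≤ ξ) := by
  obtain ⟨hr0, hr1⟩ := hr
  obtain ⟨h10, h11⟩ := hp₁
  obtain ⟨h20, h21⟩ := hp₂
  have key : 1 - min 1 (1 - r + min (min 1 (1 - p₁ + p₂)) (min 1 (1 - p₂ + p₁))) =
      max 0 (max (r + p₁ - p₂ - 1) (r - p₁ + p₂ - 1)) := by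
    rcases le_total p₁ p₂ with h | h <;>
    · simp only [min_def, max_def] <;> split_ifs <;> linarith
  refine ⟨key, fun ξ hξ => ?_⟩
  rw [key]
  constructor
  · intro h
    exact ⟨le_trans (le_max_of_le_right (le_max_left _ _)) h,
           le_trans (le_max_of_le_right (le_max_right _ _)) h⟩
  · intro ⟨h1, h2⟩
    exact max_le hξ (max_le h1 h2)
end
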